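/- There exists a C∞ function ψ:ℝ²→ℝ×ℝ² = ℝ³ such that: (i) ψ(x,θ+2π)=ψ(x,θ) for all x,θ; (ii) ψ(x,θ) = (x, cos θ, sin θ) whenever x ≤ 0; (iii) ψ(x,θ) = (0, eˣ·cos θ, eˣ·sin θ) whenever x ≥ 1; (iv) writing ψ(x,θ)=(a,b) with a∈ℝ and b∈ℝ², one has |b| ≤ e whenever x ≤ 1; and (v) there exist constants δ₀>0 and m_ψ>0 such that for all x,y,θ,σ ∈ ℝ with |ψ(x,θ)−ψ(y,σ)| ≤ δ₀ and |θ−σ| ≤ π/2: |ψ(x,θ)−ψ(y,σ)| ≥ m_ψ·|(x,θ)−(y,σ)| and |Dψ(x,θ)ᵀ(ψ(x,θ)−ψ(y,σ))| ≥ m_ψ·|(x,θ)−(y,σ)|, where Dψ(x,θ)ᵀ:ℝ³→ℝ² is the adjoint of the differential Dψ(x,θ):ℝ²→ℝ³. -/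

import Mathlib

/-!
Take `ψ(x, θ) = (h x, ρ x · e^{iθ})` with `log ρ x = x χ(x)` (`χ` the smooth step from 0 to 1)
and `h x = x - log ρ x`. Along the profile curve `γ = (h, ρ)` one has `h' + ρ' ≥ 1` and `ρ ≥ 1`,
so `|ψ(x, θ) - ψ(y, σ)|² = |γ x - γ y|² + 2 ρ(x) ρ(y) (1 - cos (θ - σ))` dominates
`|x - y|² + |θ - σ|²`. The angular component of `Dψᵀ (ψ(x, θ) - ψ(y, σ))` is
`ρ(x) ρ(y) sin (θ - σ)`; the radial one is `⟪γ' x, γ x - γ y⟫` up to a term bounded by the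
angular one, and `|⟪γ' x, γ x - γ y⟫| ≥ |x - y| / 4` as soon as `⟪γ' x, γ' t⟫ ≥ 1/4` for all `t`
between `x` and `y`. By uniform continuity of `γ'` on `[-1, 2]` (outside which `γ'` is `(1, 0)`
or `(0, eˣ)`) this holds when `|x - y|` is small, which is forced by `|ψ(x, θ) - ψ(y, σ)| ≤ δ₀`.
-/

open Set Real Filter
open scoped ContDiff

/-- Euclidean norm on `ℝ²`. -/
noncomputable def norm2 (p : ℝ × ℝ) : ℝ := Real.sqrt (p.1 ^ 2 + p.2 ^ 2)

/-- Euclidean norm on `ℝ³ = ℝ × ℝ²`. -/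
noncomputable def norm3 (p : ℝ × ℝ × ℝ) : ℝ := Real.sqrt (p.1 ^ 2 + p.2.1 ^ 2 + p.2.2 ^ 2)

/-- Euclidean scalar product on `ℝ³ = ℝ × ℝ²`. -/
def dot3 (a b : ℝ × ℝ × ℝ) : ℝ := a.1 * b.1 + a.2.1 * b.2.1 + a.2.2 * b.2.2

/-- `Dψ(z)ᵀ v`: the adjoint (with respect to the Euclidean scalar products) of the
differential of `ψ` at `z`, applied to `v ∈ ℝ³`. -/
noncomputable def DpsiT (ψ : ℝ × ℝ → ℝ × ℝ × ℝ) (z : ℝ × ℝ) (v : ℝ × ℝ × ℝ) : ℝ × ℝ :=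
  (dot3 (fderiv ℝ ψ z (1, 0)) v, dot3 (fderiv ℝ ψ z (0, 1)) v)

namespace Real

theorem abs_le_two_mul_abs_sin {δ : ℝ} (h : |δ| ≤ π / 2) : |δ| ≤ 2 * |sin δ| := by
  have hπ : 2 / 4 * |δ| ≤ 2 / π * |δ| := by gcongr; exact pi_le_four
  linarith [mul_abs_le_abs_sin h]

theorem sq_div_eight_le_one_sub_cos {δ : ℝ} (h : |δ| ≤ π / 2) :
    δ ^ 2 / 8 ≤ 1 - cos δ := by
  have hsin : δ ^ 2 ≤ 4 * sin δ ^ 2 := by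
    rw [← sq_abs δ, ← sq_abs (sin δ)]
    nlinarith [abs_le_two_mul_abs_sin h, abs_nonneg δ]
  nlinarith [sin_sq_add_cos_sq δ, cos_le_one δ, neg_one_le_cos δ]

theorem one_sub_cos_le_abs_sin {δ : ℝ} (h : |δ| ≤ π / 2) : 1 - cos δ ≤ |sin δ| := by
  have hcos : 0 ≤ cos δ := cos_nonneg_of_mem_Icc (abs_le.1 h)
  have hsin : sin δ ^ 2 ≤ |sin δ| := by
    rw [← sq_abs]; nlinarith [abs_sin_le_one δ, abs_nonneg (sin δ)]
  nlinarith [sin_sq_add_cos_sq δ, cos_le_one δ]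

end Real

theorem norm2_mk_sub_mk (x θ y σ : ℝ) :
    norm2 ((x, θ) - (y, σ)) = √((x - y) ^ 2 + (θ - σ) ^ 2) := rfl

theorem abs_fst_le_norm2 (p : ℝ × ℝ) : |p.1| ≤ norm2 p :=
  abs_le_sqrt (by nlinarith [sq_nonneg p.2])

theorem abs_snd_le_norm2 (p : ℝ × ℝ) : |p.2| ≤ norm2 p :=
  abs_le_sqrt (by nlinarith [sq_nonneg p.1])

theorem norm2_le_abs_add_abs (p : ℝ × ℝ) : norm2 p ≤ |p.1| + |p.2| := by
  rw [norm2, sqrt_le_left (by positivity), add_sq, sq_abs, sq_abs]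
  nlinarith [abs_nonneg p.1, abs_nonneg p.2]

theorem sq_norm3 (p : ℝ × ℝ × ℝ) : norm3 p ^ 2 = p.1 ^ 2 + p.2.1 ^ 2 + p.2.2 ^ 2 :=
  sq_sqrt (by positivity)

namespace LogCartesian

noncomputable def logRadius (x : ℝ) : ℝ := x * smoothTransition x

noncomputable def radius (x : ℝ) : ℝ := exp (logRadius x)

noncomputable def height (x : ℝ) : ℝ := x - logRadius x

theorem contDiff_logRadius : ContDiff ℝ ∞ logRadius :=
  contDiff_id.mul (smoothTransition.contDiff (n := ⊤))

theorem contDiff_radius : ContDiff ℝ ∞ radius := contDiff_exp.comp contDiff_logRadius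

theorem contDiff_height : ContDiff ℝ ∞ height := contDiff_id.sub contDiff_logRadius

theorem logRadius_of_nonpos {x : ℝ} (hx : x ≤ 0) : logRadius x = 0 := by
  simp [logRadius, smoothTransition.zero_of_nonpos hx]

theorem logRadius_of_one_le {x : ℝ} (hx : 1 ≤ x) : logRadius x = x := by
  simp [logRadius, smoothTransition.one_of_one_le hx]

theorem logRadius_nonneg (x : ℝ) : 0 ≤ logRadius x := by
  rcases le_or_gt x 0 with hx | hx
  · rw [logRadius_of_nonpos hx]
  · exact mul_nonneg hx.le (smoothTransition.nonneg x)

theorem logRadius_le_self {x : ℝ} (hx : 0 ≤ x) : logRadius x ≤ x :=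
  mul_le_of_le_one_right hx (smoothTransition.le_one x)

theorem monotone_logRadius : Monotone logRadius := by
  intro x y hxy
  rcases le_or_gt x 0 with hx | hx
  · exact (logRadius_of_nonpos hx).trans_le (logRadius_nonneg y)
  · exact mul_le_mul hxy (smoothTransition.monotone hxy) (smoothTransition.nonneg x)
      (hx.le.trans hxy)

theorem deriv_logRadius_nonneg (x : ℝ) : 0 ≤ deriv logRadius x :=
  monotone_logRadius.deriv_nonneg

theorem deriv_logRadius_of_nonpos {x : ℝ} (hx : x ≤ 0) : deriv logRadius x = 0 :=
  IsLocalMin.deriv_eq_zero <| IsMinOn.isLocalMin (s := univ)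
    (fun y _ => (logRadius_of_nonpos hx).trans_le (logRadius_nonneg y)) univ_mem

theorem deriv_logRadius_of_one_le {x : ℝ} (hx : 1 ≤ x) : deriv logRadius x = 1 := by
  -- `logRadius t ≤ t` for `t > 0`, with equality at `x`
  have hmax : IsLocalMax (fun t => logRadius t - t) x :=
    IsMaxOn.isLocalMax (s := Ioi 0)
      (fun y hy => by simp [logRadius_of_one_le hx, logRadius_le_self hy.le])
      (Ioi_mem_nhds (by linarith))
  have hderiv : deriv (fun t => logRadius t - t) x = deriv logRadius x - 1 :=
    ((contDiff_logRadius.differentiable (by simp) x).hasDerivAt.sub (hasDerivAt_id' x)).deriv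
  linarith [hmax.deriv_eq_zero]

theorem exists_deriv_logRadius_le : ∃ U, ∀ x, deriv logRadius x ≤ U := by
  obtain ⟨U, hU⟩ := (isCompact_Icc (a := (0 : ℝ)) (b := 1)).bddAbove_image
    (contDiff_logRadius.continuous_deriv (by simp)).continuousOn
  refine ⟨max U 1, fun x => ?_⟩
  rcases le_or_gt x 0 with h0 | h0
  · rw [deriv_logRadius_of_nonpos h0]; positivity
  rcases le_or_gt 1 x with h1 | h1
  · rw [deriv_logRadius_of_one_le h1]; exact le_max_right _ _
  · exact (hU ⟨x, ⟨h0.le, h1.le⟩, rfl⟩).trans (le_max_left _ _)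

theorem radius_of_nonpos {x : ℝ} (hx : x ≤ 0) : radius x = 1 := by
  simp [radius, logRadius_of_nonpos hx]

theorem radius_of_one_le {x : ℝ} (hx : 1 ≤ x) : radius x = exp x := by
  simp [radius, logRadius_of_one_le hx]

theorem one_le_radius (x : ℝ) : 1 ≤ radius x := one_le_exp (logRadius_nonneg x)

theorem radius_le_exp_one {x : ℝ} (hx : x ≤ 1) : radius x ≤ exp 1 := by
  refine exp_le_exp.2 ?_
  rcases le_or_gt x 0 with h0 | h0
  · rw [logRadius_of_nonpos h0]; norm_num
  · exact (logRadius_le_self h0.le).trans hx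

theorem height_of_nonpos {x : ℝ} (hx : x ≤ 0) : height x = x := by
  simp [height, logRadius_of_nonpos hx]

theorem height_of_one_le {x : ℝ} (hx : 1 ≤ x) : height x = 0 := by
  simp [height, logRadius_of_one_le hx]

theorem hasDerivAt_logRadius (x : ℝ) : HasDerivAt logRadius (deriv logRadius x) x :=
  (contDiff_logRadius.differentiable (by simp) x).hasDerivAt

theorem hasDerivAt_height (x : ℝ) : HasDerivAt height (1 - deriv logRadius x) x :=
  (hasDerivAt_id' x).sub (hasDerivAt_logRadius x)

theorem hasDerivAt_radius (x : ℝ) : HasDerivAt radius (deriv logRadius x * radius x) x := by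
  rw [mul_comm]; exact (hasDerivAt_exp (logRadius x)).comp x (hasDerivAt_logRadius x)

theorem deriv_height (x : ℝ) : deriv height x = 1 - deriv logRadius x :=
  (hasDerivAt_height x).deriv

theorem deriv_radius (x : ℝ) : deriv radius x = deriv logRadius x * radius x :=
  (hasDerivAt_radius x).deriv

theorem one_le_deriv_height_add_deriv_radius (x : ℝ) :
    1 ≤ deriv height x + deriv radius x := by
  rw [deriv_height, deriv_radius]
  nlinarith [deriv_logRadius_nonneg x, one_le_radius x]

theorem deriv_radius_nonneg (x : ℝ) : 0 ≤ deriv radius x := by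
  rw [deriv_radius]; exact mul_nonneg (deriv_logRadius_nonneg x) (exp_pos _).le

theorem deriv_radius_le {U : ℝ} (hU : ∀ x, deriv logRadius x ≤ U) (x : ℝ) :
    deriv radius x ≤ U * radius x := by
  rw [deriv_radius]; exact mul_le_mul_of_nonneg_right (hU x) (exp_pos _).le

theorem sub_le_height_add_radius_sub {x y : ℝ} (hxy : x ≤ y) :
    y - x ≤ (height y + radius y) - (height x + radius x) := by
  have hderiv (t : ℝ) : HasDerivAt (fun t => height t + radius t)
      (deriv height t + deriv radius t) t := by
    rw [deriv_height, deriv_radius]; exact (hasDerivAt_height t).add (hasDerivAt_radius t)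
  have := mul_sub_le_image_sub_of_le_deriv (fun t => (hderiv t).differentiableAt)
    (fun t => (hderiv t).deriv ▸ one_le_deriv_height_add_deriv_radius t) hxy
  linarith

theorem sq_sub_le_two_mul (x y : ℝ) :
    (x - y) ^ 2 ≤ 2 * ((height x - height y) ^ 2 + (radius x - radius y) ^ 2) := by
  have key : (x - y) ^ 2 ≤ ((height x - height y) + (radius x - radius y)) ^ 2 := by
    rcases le_total x y with hxy | hxy
    · nlinarith [sub_le_height_add_radius_sub hxy]
    · nlinarith [sub_le_height_add_radius_sub hxy]
  nlinarith [sq_nonneg ((height x - height y) - (radius x - radius y))]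

theorem exists_quarter_le_deriv_inner : ∃ r > 0, ∀ x t, |x - t| ≤ r →
    1 / 4 ≤ deriv height x * deriv height t + deriv radius x * deriv radius t := by
  set q : ℝ × ℝ → ℝ := fun p =>
    deriv height p.1 * deriv height p.2 + deriv radius p.1 * deriv radius p.2
  have hq : Continuous q := by
    have hh := contDiff_height.continuous_deriv (by simp)
    have hr := contDiff_radius.continuous_deriv (by simp)
    fun_prop
  obtain ⟨δ, hδ, hclose⟩ := Metric.uniformContinuousOn_iff.1
    ((isCompact_Icc.prod isCompact_Icc).uniformContinuousOn_of_continuous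
      (s := Icc (-1 : ℝ) 2 ×ˢ Icc (-1 : ℝ) 2) hq.continuousOn) (1 / 4) (by norm_num)
  refine ⟨min (δ / 2) 1, by positivity, fun x t hxt => ?_⟩
  obtain ⟨hxtδ, hxt1⟩ := le_min_iff.1 hxt
  by_cases h0 : x ≤ 0 ∧ t ≤ 0
  · norm_num [deriv_height, deriv_radius, deriv_logRadius_of_nonpos h0.1,
      deriv_logRadius_of_nonpos h0.2]
  by_cases h1 : 1 ≤ x ∧ 1 ≤ t
  · simp only [deriv_height, deriv_radius, deriv_logRadius_of_one_le h1.1,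
      deriv_logRadius_of_one_le h1.2, radius_of_one_le h1.1, radius_of_one_le h1.2]
    nlinarith [one_le_exp (by linarith [h1.1] : 0 ≤ x), one_le_exp (by linarith [h1.2] : 0 ≤ t)]
  have hmem : x ∈ Icc (-1 : ℝ) 2 ∧ t ∈ Icc (-1 : ℝ) 2 := by
    rw [abs_le] at hxt1
    simp only [mem_Icc]
    grind
  have hdiag : 1 / 2 ≤ q (x, x) := by
    have := one_le_deriv_height_add_deriv_radius x
    nlinarith [sq_nonneg (deriv height x - deriv radius x)]
  have hdist : dist (x, x) (x, t) < δ := by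
    rw [Prod.dist_eq, dist_self, Real.dist_eq, max_eq_right (abs_nonneg _)]
    linarith
  have := hclose (x, x) ⟨hmem.1, hmem.1⟩ (x, t) ⟨hmem.1, hmem.2⟩ hdist
  rw [Real.dist_eq, abs_lt] at this
  change 1 / 4 ≤ q (x, t)
  linarith

theorem mul_sub_le_deriv_inner_sub {c a x y : ℝ} (hxy : x ≤ y)
    (hc : ∀ t ∈ Icc x y,
      c ≤ deriv height a * deriv height t + deriv radius a * deriv radius t) :
    c * (y - x) ≤
      deriv height a * (height y - height x) + deriv radius a * (radius y - radius x) := by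
  set F : ℝ → ℝ := fun t => deriv height a * height t + deriv radius a * radius t
  have hF (t : ℝ) : HasDerivAt F
      (deriv height a * deriv height t + deriv radius a * deriv radius t) t := by
    rw [deriv_height t, deriv_radius t]
    exact ((hasDerivAt_height t).const_mul _).add ((hasDerivAt_radius t).const_mul _)
  have := (convex_Icc x y).mul_sub_le_image_sub_of_le_deriv
    (fun t _ => (hF t).continuousAt.continuousWithinAt)
    (fun t _ => (hF t).differentiableAt.differentiableWithinAt)
    (fun t ht => (hF t).deriv ▸ hc t (interior_subset ht))
    x (left_mem_Icc.2 hxy) y (right_mem_Icc.2 hxy) hxy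
  simp only [F] at this
  linarith

theorem abs_sub_le_four_mul_abs_deriv_inner_sub {r x y : ℝ}
    (hr : ∀ x t, |x - t| ≤ r →
      1 / 4 ≤ deriv height x * deriv height t + deriv radius x * deriv radius t)
    (hxy : |x - y| ≤ r) :
    |x - y| ≤
      4 * |deriv height x * (height x - height y) + deriv radius x * (radius x - radius y)| := by
  have hnear : ∀ t ∈ uIcc x y, 1 / 4 ≤
      deriv height x * deriv height t + deriv radius x * deriv radius t :=
    fun t ht => hr x t <| by
      rw [abs_sub_comm] at hxy ⊢; exact (abs_sub_left_of_mem_uIcc ht).trans hxy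
  rcases le_total x y with h | h
  · have := mul_sub_le_deriv_inner_sub h (fun t ht => hnear t (Icc_subset_uIcc ht))
    rw [abs_sub_comm, abs_of_nonneg (sub_nonneg.2 h)]
    linarith [neg_abs_le
      (deriv height x * (height x - height y) + deriv radius x * (radius x - radius y))]
  · have := mul_sub_le_deriv_inner_sub h (fun t ht => hnear t (Icc_subset_uIcc' ht))
    rw [abs_of_nonneg (sub_nonneg.2 h)]
    linarith [le_abs_self
      (deriv height x * (height x - height y) + deriv radius x * (radius x - radius y))]

noncomputable def map (p : ℝ × ℝ) : ℝ × ℝ × ℝ :=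
  (height p.1, radius p.1 * cos p.2, radius p.1 * sin p.2)

theorem contDiff_map : ContDiff ℝ ∞ map :=
  (contDiff_height.comp contDiff_fst).prodMk
    (((contDiff_radius.comp contDiff_fst).mul (contDiff_cos.comp contDiff_snd)).prodMk
      ((contDiff_radius.comp contDiff_fst).mul (contDiff_sin.comp contDiff_snd)))

theorem map_add_two_pi (x θ : ℝ) : map (x, θ + 2 * π) = map (x, θ) := by
  simp [map]

theorem map_of_nonpos {x : ℝ} (hx : x ≤ 0) (θ : ℝ) : map (x, θ) = (x, cos θ, sin θ) := by
  simp [map, height_of_nonpos hx, radius_of_nonpos hx]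

theorem map_of_one_le {x : ℝ} (hx : 1 ≤ x) (θ : ℝ) :
    map (x, θ) = (0, exp x * cos θ, exp x * sin θ) := by
  simp [map, height_of_one_le hx, radius_of_one_le hx]

theorem norm2_snd_map (x θ : ℝ) : norm2 (map (x, θ)).2 = radius x := by
  rw [norm2, ← sqrt_sq (one_le_radius x |>.trans' zero_le_one)]
  congr 1
  simp only [map]
  linear_combination radius x ^ 2 * sin_sq_add_cos_sq θ

theorem fderiv_map_apply_fst (x θ : ℝ) :
    fderiv ℝ map (x, θ) (1, 0) =
      (deriv height x, deriv radius x * cos θ, deriv radius x * sin θ) := by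
  have hline : HasDerivAt (fun t : ℝ => (t, θ)) (1, 0) x :=
    (hasDerivAt_id x).prodMk (hasDerivAt_const x θ)
  refine ((contDiff_map.differentiable (by simp) _).hasFDerivAt.comp_hasDerivAt x hline).unique ?_
  show HasDerivAt (fun t => (height t, radius t * cos θ, radius t * sin θ)) _ x
  rw [deriv_height, deriv_radius]
  exact (hasDerivAt_height x).prodMk
    (((hasDerivAt_radius x).mul_const _).prodMk ((hasDerivAt_radius x).mul_const _))

theorem fderiv_map_apply_snd (x θ : ℝ) :
    fderiv ℝ map (x, θ) (0, 1) = (0, -(radius x * sin θ), radius x * cos θ) := by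
  have hline : HasDerivAt (fun t : ℝ => (x, t)) (0, 1) θ :=
    (hasDerivAt_const θ x).prodMk (hasDerivAt_id θ)
  refine ((contDiff_map.differentiable (by simp) _).hasFDerivAt.comp_hasDerivAt θ hline).unique ?_
  show HasDerivAt (fun t => (height x, radius x * cos t, radius x * sin t)) _ θ
  have hcos := (hasDerivAt_cos θ).const_mul (radius x)
  rw [mul_neg] at hcos
  exact (hasDerivAt_const θ _).prodMk (hcos.prodMk ((hasDerivAt_sin θ).const_mul (radius x)))

theorem sq_norm3_map_sub (x θ y σ : ℝ) :
    norm3 (map (x, θ) - map (y, σ)) ^ 2 = (height x - height y) ^ 2 +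
      (radius x - radius y) ^ 2 + 2 * radius x * radius y * (1 - cos (θ - σ)) := by
  rw [sq_norm3]
  simp only [map, Prod.fst_sub, Prod.snd_sub, cos_sub]
  linear_combination radius x ^ 2 * sin_sq_add_cos_sq θ + radius y ^ 2 * sin_sq_add_cos_sq σ

theorem DpsiT_map_sub (x θ y σ : ℝ) :
    DpsiT map (x, θ) (map (x, θ) - map (y, σ)) =
      (deriv height x * (height x - height y) +
        deriv radius x * (radius x - radius y * cos (θ - σ)),
       radius x * radius y * sin (θ - σ)) := by
  simp only [DpsiT, dot3, fderiv_map_apply_fst, fderiv_map_apply_snd, map, Prod.fst_sub,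
    Prod.snd_sub, cos_sub, sin_sub, Prod.mk.injEq]
  constructor
  · linear_combination deriv radius x * radius x * sin_sq_add_cos_sq θ
  · ring

theorem norm2_sub_le_two_mul_norm3_map_sub {θ σ : ℝ} (hδ : |θ - σ| ≤ π / 2) (x y : ℝ) :
    norm2 ((x, θ) - (y, σ)) ≤ 2 * norm3 (map (x, θ) - map (y, σ)) := by
  have hρ : 1 ≤ radius x * radius y := one_le_mul_of_one_le_of_one_le
    (one_le_radius x) (one_le_radius y)
  have hcos := sq_div_eight_le_one_sub_cos hδ
  have hsq : (θ - σ) ^ 2 / 4 ≤ 2 * radius x * radius y * (1 - cos (θ - σ)) := by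
    nlinarith [sq_nonneg (θ - σ)]
  rw [norm2_mk_sub_mk, sqrt_le_left (by unfold norm3; positivity), mul_pow,
    sq_norm3_map_sub]
  nlinarith [sq_sub_le_two_mul x y]

theorem norm2_sub_le_mul_norm2_DpsiT_map_sub {U r : ℝ} (hU : ∀ x, deriv logRadius x ≤ U)
    (hr : ∀ x t, |x - t| ≤ r →
      1 / 4 ≤ deriv height x * deriv height t + deriv radius x * deriv radius t)
    {x θ y σ : ℝ} (hxy : |x - y| ≤ r) (hδ : |θ - σ| ≤ π / 2) :
    norm2 ((x, θ) - (y, σ)) ≤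
      4 * (U + 2) * norm2 (DpsiT map (x, θ) (map (x, θ) - map (y, σ))) := by
  have hU0 : 0 ≤ U := (deriv_logRadius_nonneg 0).trans (hU 0)
  set P := deriv height x * (height x - height y) + deriv radius x * (radius x - radius y)
  set T := deriv radius x * radius y * (1 - cos (θ - σ))
  set B := radius x * radius y * sin (θ - σ)
  set N := norm2 (DpsiT map (x, θ) (map (x, θ) - map (y, σ)))
  have hA : (DpsiT map (x, θ) (map (x, θ) - map (y, σ))).1 = P + T := by
    rw [DpsiT_map_sub]; ring
  have hB : (DpsiT map (x, θ) (map (x, θ) - map (y, σ))).2 = B := by rw [DpsiT_map_sub]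
  have hP : |x - y| ≤ 4 * |P| := abs_sub_le_four_mul_abs_deriv_inner_sub hr hxy
  have hρ : 1 ≤ radius x * radius y :=
    one_le_mul_of_one_le_of_one_le (one_le_radius x) (one_le_radius y)
  have habsB : |B| = radius x * radius y * |sin (θ - σ)| := by
    rw [abs_mul, abs_of_pos (by positivity : 0 < radius x * radius y)]
  have hT : |T| ≤ U * |B| := by
    have h1c : 0 ≤ 1 - cos (θ - σ) := sub_nonneg.2 (cos_le_one _)
    have hy : 0 ≤ radius y := zero_le_one.trans (one_le_radius y)
    have hx : 0 ≤ radius x := zero_le_one.trans (one_le_radius x)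
    rw [abs_of_nonneg (mul_nonneg (mul_nonneg (deriv_radius_nonneg x) hy) h1c), habsB]
    calc T = deriv radius x * radius y * (1 - cos (θ - σ)) := rfl
      _ ≤ U * radius x * radius y * |sin (θ - σ)| := by
          gcongr
          · exact deriv_radius_le hU x
          · exact one_sub_cos_le_abs_sin hδ
      _ = U * (radius x * radius y * |sin (θ - σ)|) := by ring
  have hδB : |θ - σ| ≤ 2 * |B| := by
    rw [habsB]
    nlinarith [abs_le_two_mul_abs_sin hδ, abs_nonneg (sin (θ - σ))]
  have hPT : |P| ≤ |P + T| + |T| := by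
    simpa using abs_sub (P + T) T
  have hAN : |P + T| ≤ N := hA ▸ abs_fst_le_norm2 _
  have hBN : |B| ≤ N := hB ▸ abs_snd_le_norm2 _
  calc norm2 ((x, θ) - (y, σ)) ≤ |x - y| + |θ - σ| := norm2_le_abs_add_abs _
    _ ≤ 4 * |P + T| + (4 * U + 2) * |B| := by nlinarith
    _ ≤ 4 * (U + 2) * N := by nlinarith [abs_nonneg B, abs_nonneg (P + T)]

end LogCartesian

open LogCartesian in
theorem interpolation_map_exists :
    ∃ ψ : ℝ × ℝ → ℝ × ℝ × ℝ,
      ContDiff ℝ ∞ ψ ∧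
      (∀ x θ : ℝ, ψ (x, θ + 2 * π) = ψ (x, θ)) ∧
      (∀ x θ : ℝ, x ≤ 0 → ψ (x, θ) = (x, Real.cos θ, Real.sin θ)) ∧
      (∀ x θ : ℝ, 1 ≤ x → ψ (x, θ) = (0, Real.exp x * Real.cos θ, Real.exp x * Real.sin θ)) ∧
      (∀ x θ : ℝ, x ≤ 1 → norm2 (ψ (x, θ)).2 ≤ Real.exp 1) ∧
      ∃ δ0 : ℝ, 0 < δ0 ∧ ∃ mψ : ℝ, 0 < mψ ∧
        ∀ x θ y σ : ℝ,
          norm3 (ψ (x, θ) - ψ (y, σ)) ≤ δ0 → |θ - σ| ≤ π / 2 →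
          mψ * norm2 ((x, θ) - (y, σ)) ≤ norm3 (ψ (x, θ) - ψ (y, σ)) ∧
          mψ * norm2 ((x, θ) - (y, σ)) ≤ norm2 (DpsiT ψ (x, θ) (ψ (x, θ) - ψ (y, σ))) := by
  obtain ⟨U, hU⟩ := exists_deriv_logRadius_le
  obtain ⟨r, hr, hnear⟩ := exists_quarter_le_deriv_inner
  have hU0 : 0 ≤ U := (deriv_logRadius_nonneg 0).trans (hU 0)
  refine ⟨map, contDiff_map, map_add_two_pi, fun x θ hx => map_of_nonpos hx θ,
    fun x θ hx => map_of_one_le hx θ,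
    fun x θ hx => (norm2_snd_map x θ).trans_le (radius_le_exp_one hx),
    r / 2, half_pos hr, 1 / (4 * (U + 2)), by positivity, fun x θ y σ hclose hδ => ?_⟩
  have hlower := norm2_sub_le_two_mul_norm3_map_sub hδ x y
  have hxy : |x - y| ≤ r := (abs_fst_le_norm2 ((x, θ) - (y, σ))).trans (by linarith)
  have hupper := norm2_sub_le_mul_norm2_DpsiT_map_sub hU hnear hxy hδ
  have hnorm3 : 0 ≤ norm3 (map (x, θ) - map (y, σ)) := sqrt_nonneg _
  simp only [one_div_mul_eq_div, div_le_iff₀ (by positivity : (0 : ℝ) < 4 * (U + 2))]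
  exact ⟨by nlinarith [mul_nonneg hnorm3 hU0], by linarith⟩
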